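/- (Banach's theorem on symmetric tensors.) Let n ≥ 1 and d ≥ 1 be integers and let S : (Fin d → Fin n) → ℂ be symmetric. Then sSup{ |Σ_{i : Fin d → Fin n} S(i) ∏_{k} x^{(k)}(i(k))| : x^{(1)},…,x^{(d)} ∈ ℂⁿ with ‖x^{(k)}‖ = 1 for all k } = sSup{ |Σ_{i : Fin d → Fin n} S(i) ∏_{k} y(i(k))| : y ∈ ℂⁿ, ‖y‖ = 1 }; that is, the spectral norm of a symmetric tensor is attained on rank-one symmetric tensors. -/

import Mathlib

/-!
Among the unit tuples maximizing `‖f‖`, choose one, `z`, that also maximizes the frame potential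
`∑ a, ∑ b, ‖⟪z a, z b⟫‖ ^ 2`; both maxima exist by compactness. If two entries `u = z j` and
`v = z k` were not parallel, the polarization identity
`f (…, u + v, …, u + v, …) - f (…, u - v, …, u - v, …) = 4 f z` together with
`‖u + v‖ ^ 2 + ‖u - v‖ ^ 2 = 4` forces the two tuples obtained by putting the normalized `u + v`,
resp. `u - v`, into both slots `j` and `k` to maximize `‖f‖` as well. With weights
`‖u ± v‖ ^ 2 / 4` their frame potentials average to that of `z` plus `2 (1 - ‖⟪u, v⟫‖ ^ 2) > 0`,
a contradiction. Hence all entries of `z` are unimodular multiples of one unit vector `y`, and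
`‖f z‖ = ‖f (y, …, y)‖`.
-/

open Finset Function
open scoped InnerProductSpace

theorem norm_add_sq_add_norm_sub_sq_of_norm_eq_one (𝕜 : Type*) {E : Type*} [RCLike 𝕜]
    [NormedAddCommGroup E] [InnerProductSpace 𝕜 E] {u v : E} (hu : ‖u‖ = 1) (hv : ‖v‖ = 1) :
    ‖u + v‖ ^ 2 + ‖u - v‖ ^ 2 = 4 := by
  have := parallelogram_law_with_norm 𝕜 u v
  rw [hu, hv] at this
  linarith

section UnitVectors

variable {𝕜 E : Type*} [RCLike 𝕜] [NormedAddCommGroup E] [InnerProductSpace 𝕜 E]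

theorem exists_norm_eq_one_smul_eq {x : E} (hx : x ≠ 0) :
    ∃ s : E, ‖s‖ = 1 ∧ x = (‖x‖ : 𝕜) • s :=
  ⟨(‖x‖⁻¹ : 𝕜) • x, norm_smul_inv_norm hx, by
    rw [smul_smul, mul_inv_cancel₀ (by simpa using hx), one_smul]⟩

theorem norm_inner_smul_left_sq (x y : E) {r : ℝ} (hr : 0 ≤ r) :
    ‖⟪(r : 𝕜) • x, y⟫_𝕜‖ ^ 2 = r ^ 2 * ‖⟪x, y⟫_𝕜‖ ^ 2 := by
  rw [inner_smul_left, norm_mul, RCLike.norm_conj, RCLike.norm_ofReal, abs_of_nonneg hr, mul_pow]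

theorem norm_update_update_eq_one {ι : Type*} [DecidableEq ι] {v : ι → E} {a b : E}
    (hv : ∀ i, ‖v i‖ = 1) (ha : ‖a‖ = 1) (hb : ‖b‖ = 1) (j k i : ι) :
    ‖update (update v j a) k b i‖ = 1 := by
  simp only [update_apply]
  split_ifs
  exacts [hb, ha, hv i]

end UnitVectors

section FramePotential

variable (𝕜 : Type*) {E ι : Type*} [RCLike 𝕜] [NormedAddCommGroup E] [InnerProductSpace 𝕜 E]
  [Fintype ι]

def framePotential (v : ι → E) : ℝ := ∑ a, ∑ b, ‖⟪v a, v b⟫_𝕜‖ ^ 2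

theorem continuous_framePotential : Continuous (framePotential 𝕜 : (ι → E) → ℝ) := by
  unfold framePotential
  fun_prop

variable {𝕜} [DecidableEq ι] {j k : ι}

theorem Finset.sum_univ_eq_add_add_sum_compl {M : Type*} [AddCommMonoid M] (hjk : j ≠ k)
    (g : ι → M) : ∑ i, g i = g j + g k + ∑ i ∈ {j, k}ᶜ, g i := by
  rw [← sum_add_sum_compl {j, k}, sum_pair hjk]

theorem framePotential_update_update (hjk : j ≠ k) (v : ι → E) (a b : E) :
    framePotential 𝕜 (update (update v j a) k b) =
      ‖⟪a, a⟫_𝕜‖ ^ 2 + 2 * ‖⟪a, b⟫_𝕜‖ ^ 2 + ‖⟪b, b⟫_𝕜‖ ^ 2 +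
        2 * (∑ t ∈ {j, k}ᶜ, ‖⟪a, v t⟫_𝕜‖ ^ 2 + ∑ t ∈ {j, k}ᶜ, ‖⟪b, v t⟫_𝕜‖ ^ 2) +
        ∑ t ∈ {j, k}ᶜ, ∑ t' ∈ {j, k}ᶜ, ‖⟪v t, v t'⟫_𝕜‖ ^ 2 := by
  set w := update (update v j a) k b
  have hw : ∀ t ∈ ({j, k}ᶜ : Finset ι), w t = v t := by
    intro t ht
    simp only [mem_compl, mem_insert, mem_singleton, not_or] at ht
    simp [w, ht.1, ht.2]
  have hleft (c : E) : ∑ t ∈ {j, k}ᶜ, ‖⟪c, w t⟫_𝕜‖ ^ 2 = ∑ t ∈ {j, k}ᶜ, ‖⟪c, v t⟫_𝕜‖ ^ 2 :=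
    sum_congr rfl fun t ht => by rw [hw t ht]
  have hright (c : E) : ∑ t ∈ {j, k}ᶜ, ‖⟪w t, c⟫_𝕜‖ ^ 2 = ∑ t ∈ {j, k}ᶜ, ‖⟪c, v t⟫_𝕜‖ ^ 2 :=
    sum_congr rfl fun t ht => by rw [hw t ht, norm_inner_symm]
  have hrest : ∑ t ∈ {j, k}ᶜ, ∑ t' ∈ {j, k}ᶜ, ‖⟪w t, w t'⟫_𝕜‖ ^ 2 =
      ∑ t ∈ {j, k}ᶜ, ∑ t' ∈ {j, k}ᶜ, ‖⟪v t, v t'⟫_𝕜‖ ^ 2 :=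
    sum_congr rfl fun t ht => sum_congr rfl fun t' ht' => by rw [hw t ht, hw t' ht']
  simp only [framePotential, Finset.sum_univ_eq_add_add_sum_compl hjk, sum_add_distrib, w,
    update_self, update_of_ne hjk]
  rw [hleft, hleft, hright, hright, hrest, norm_inner_symm b a]
  ring

theorem framePotential_merge (hjk : j ≠ k) {v : ι → E} (hj : ‖v j‖ = 1) (hk : ‖v k‖ = 1)
    {s q : E} (hs : ‖s‖ = 1) (hq : ‖q‖ = 1) (hps : v j + v k = (‖v j + v k‖ : 𝕜) • s)
    (hmq : v j - v k = (‖v j - v k‖ : 𝕜) • q) :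
    ‖v j + v k‖ ^ 2 * framePotential 𝕜 (update (update v j s) k s) +
        ‖v j - v k‖ ^ 2 * framePotential 𝕜 (update (update v j q) k q) =
      4 * framePotential 𝕜 v + 8 * (1 - ‖⟪v j, v k⟫_𝕜‖ ^ 2) := by
  have hpm := norm_add_sq_add_norm_sub_sq_of_norm_eq_one 𝕜 hj hk
  have hcross : ‖v j + v k‖ ^ 2 * ∑ t ∈ {j, k}ᶜ, ‖⟪s, v t⟫_𝕜‖ ^ 2 +
      ‖v j - v k‖ ^ 2 * ∑ t ∈ {j, k}ᶜ, ‖⟪q, v t⟫_𝕜‖ ^ 2 =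
      2 * ∑ t ∈ {j, k}ᶜ, ‖⟪v j, v t⟫_𝕜‖ ^ 2 + 2 * ∑ t ∈ {j, k}ᶜ, ‖⟪v k, v t⟫_𝕜‖ ^ 2 := by
    simp only [mul_sum, ← sum_add_distrib]
    refine sum_congr rfl fun t _ => ?_
    rw [← norm_inner_smul_left_sq _ _ (norm_nonneg _), ← hps,
      ← norm_inner_smul_left_sq _ _ (norm_nonneg _), ← hmq, inner_add_left, inner_sub_left]
    have := parallelogram_law_with_norm 𝕜 ⟪v j, v t⟫_𝕜 ⟪v k, v t⟫_𝕜
    linarith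
  have hv : framePotential 𝕜 v = framePotential 𝕜 (update (update v j (v j)) k (v k)) := by
    rw [update_eq_self, update_eq_self]
  rw [hv, framePotential_update_update hjk, framePotential_update_update hjk,
    framePotential_update_update hjk, inner_self_eq_one_of_norm_eq_one hs,
    inner_self_eq_one_of_norm_eq_one hq, inner_self_eq_one_of_norm_eq_one hj,
    inner_self_eq_one_of_norm_eq_one hk, norm_one]
  linear_combination (4 + ∑ t ∈ {j, k}ᶜ, ∑ t' ∈ {j, k}ᶜ, ‖⟪v t, v t'⟫_𝕜‖ ^ 2) * hpm + 4 * hcross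

end FramePotential

namespace ContinuousMultilinearMap

section Symmetric

variable {R M N ι : Type*} [CommRing R] [AddCommGroup M] [Module R M] [TopologicalSpace M]
  [AddCommGroup N] [Module R N] [TopologicalSpace N] [DecidableEq ι]
  {f : ContinuousMultilinearMap R (fun _ : ι => M) N} {j k : ι}

def IsSymmetric (f : ContinuousMultilinearMap R (fun _ : ι => M) N) : Prop :=
  ∀ (σ : Equiv.Perm ι) (v : ι → M), f (v ∘ σ) = f v

theorem IsSymmetric.apply_update_update_comm (hf : f.IsSymmetric) (hjk : j ≠ k)
    (v : ι → M) (a b : M) :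
    f (update (update v j a) k b) = f (update (update v j b) k a) := by
  rw [← hf (Equiv.swap j k), Equiv.comp_swap_eq_update]
  simp [hjk, update_idem, update_comm hjk]

theorem map_update_update_add_left (f : ContinuousMultilinearMap R (fun _ : ι => M) N)
    (hjk : j ≠ k) (v : ι → M) (a a' b : M) :
    f (update (update v j (a + a')) k b) =
      f (update (update v j a) k b) + f (update (update v j a') k b) := by
  simp only [update_comm hjk, f.map_update_add]

theorem map_update_update_sub_left (f : ContinuousMultilinearMap R (fun _ : ι => M) N)
    (hjk : j ≠ k) (v : ι → M) (a a' b : M) :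
    f (update (update v j (a - a')) k b) =
      f (update (update v j a) k b) - f (update (update v j a') k b) := by
  simp only [update_comm hjk, f.map_update_sub]

theorem map_update_update_smul (f : ContinuousMultilinearMap R (fun _ : ι => M) N)
    (hjk : j ≠ k) (v : ι → M) (c : R) (a : M) :
    f (update (update v j (c • a)) k (c • a)) = c ^ 2 • f (update (update v j a) k a) := by
  rw [f.map_update_smul, update_comm hjk, f.map_update_smul, update_comm hjk, smul_smul, sq]

theorem IsSymmetric.apply_update_update_add_sub_sub (hf : f.IsSymmetric) (hjk : j ≠ k)
    (v : ι → M) (a b : M) :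
    f (update (update v j (a + b)) k (a + b)) - f (update (update v j (a - b)) k (a - b)) =
      (4 : R) • f (update (update v j a) k b) := by
  rw [map_update_update_add_left f hjk, map_update_update_sub_left f hjk, f.map_update_add,
    f.map_update_add, f.map_update_sub, f.map_update_sub, hf.apply_update_update_comm hjk v b a]
  module

end Symmetric

section Banach

variable {𝕜 E F ι : Type*} [RCLike 𝕜] [NormedAddCommGroup E] [InnerProductSpace 𝕜 E]
  [NormedAddCommGroup F] [NormedSpace 𝕜 F] [DecidableEq ι]
  {f : ContinuousMultilinearMap 𝕜 (fun _ : ι => E) F} {z : ι → E} {j k : ι}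

theorem IsSymmetric.norm_apply_merge_eq (hf : f.IsSymmetric) (hz : ∀ i, ‖z i‖ = 1)
    (hmax : ∀ v : ι → E, (∀ i, ‖v i‖ = 1) → ‖f v‖ ≤ ‖f z‖) (hjk : j ≠ k)
    (hp : z j + z k ≠ 0) (hm : z j - z k ≠ 0) {s q : E} (hs : ‖s‖ = 1) (hq : ‖q‖ = 1)
    (hps : z j + z k = (‖z j + z k‖ : 𝕜) • s) (hmq : z j - z k = (‖z j - z k‖ : 𝕜) • q) :
    ‖f (update (update z j s) k s)‖ = ‖f z‖ ∧ ‖f (update (update z j q) k q)‖ = ‖f z‖ := by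
  have hpol := hf.apply_update_update_add_sub_sub hjk z (z j) (z k)
  rw [update_eq_self, update_eq_self, hps, hmq, map_update_update_smul f hjk,
    map_update_update_smul f hjk] at hpol
  have hsum : 4 * ‖f z‖ ≤ ‖z j + z k‖ ^ 2 * ‖f (update (update z j s) k s)‖ +
      ‖z j - z k‖ ^ 2 * ‖f (update (update z j q) k q)‖ := by
    calc 4 * ‖f z‖ = ‖(4 : 𝕜) • f z‖ := by simp [norm_smul]
      _ ≤ _ := by rw [← hpol]; exact (norm_sub_le _ _).trans_eq (by simp [norm_smul])
  have hs_le := hmax _ (norm_update_update_eq_one hz hs hs j k)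
  have hq_le := hmax _ (norm_update_update_eq_one hz hq hq j k)
  have hpm := norm_add_sq_add_norm_sub_sq_of_norm_eq_one 𝕜 (hz j) (hz k)
  have hp_pos : 0 < ‖z j + z k‖ ^ 2 := by positivity
  have hm_pos : 0 < ‖z j - z k‖ ^ 2 := by positivity
  rw [← hpm, add_mul] at hsum
  constructor <;> apply le_antisymm ‹_› <;>
    nlinarith [mul_le_mul_of_nonneg_left hs_le hp_pos.le, mul_le_mul_of_nonneg_left hq_le hm_pos.le]

variable [Fintype ι]

theorem IsSymmetric.norm_inner_eq_one_of_isMaxOn (hf : f.IsSymmetric) (hz : ∀ i, ‖z i‖ = 1)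
    (hmax : ∀ v : ι → E, (∀ i, ‖v i‖ = 1) → ‖f v‖ ≤ ‖f z‖)
    (hΨ : ∀ v : ι → E, (∀ i, ‖v i‖ = 1) → ‖f v‖ = ‖f z‖ →
      framePotential 𝕜 v ≤ framePotential 𝕜 z) (j k : ι) :
    ‖⟪z j, z k⟫_𝕜‖ = 1 := by
  rcases eq_or_ne j k with rfl | hjk
  · rw [inner_self_eq_one_of_norm_eq_one (hz j), norm_one]
  by_contra hne
  have hlt : ‖⟪z j, z k⟫_𝕜‖ < 1 :=
    ((norm_inner_le_norm _ _).trans_eq (by rw [hz j, hz k, one_mul])).lt_of_ne hne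
  have hp : z j + z k ≠ 0 := fun h => hne <| by
    rw [eq_neg_of_add_eq_zero_right h, inner_neg_right, norm_neg,
      inner_self_eq_one_of_norm_eq_one (hz j), norm_one]
  have hm : z j - z k ≠ 0 := fun h => hne <| by
    rw [← sub_eq_zero.1 h, inner_self_eq_one_of_norm_eq_one (hz j), norm_one]
  obtain ⟨s, hs, hps⟩ := exists_norm_eq_one_smul_eq (𝕜 := 𝕜) hp
  obtain ⟨q, hq, hmq⟩ := exists_norm_eq_one_smul_eq (𝕜 := 𝕜) hm
  obtain ⟨hfs, hfq⟩ := hf.norm_apply_merge_eq hz hmax hjk hp hm hs hq hps hmq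
  have hΨs := hΨ _ (norm_update_update_eq_one hz hs hs j k) hfs
  have hΨq := hΨ _ (norm_update_update_eq_one hz hq hq j k) hfq
  have hmerge := framePotential_merge hjk (hz j) (hz k) hs hq hps hmq
  have hpm := norm_add_sq_add_norm_sub_sq_of_norm_eq_one 𝕜 (hz j) (hz k)
  have hc : ‖⟪z j, z k⟫_𝕜‖ ^ 2 < 1 := pow_lt_one₀ (norm_nonneg _) hlt two_ne_zero
  have h4 : (‖z j + z k‖ ^ 2 + ‖z j - z k‖ ^ 2) * framePotential 𝕜 z = 4 * framePotential 𝕜 z := by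
    rw [hpm]
  linarith [mul_le_mul_of_nonneg_left hΨs (sq_nonneg ‖z j + z k‖),
    mul_le_mul_of_nonneg_left hΨq (sq_nonneg ‖z j - z k‖)]

omit [DecidableEq ι] in
theorem norm_apply_eq_norm_apply_const (f : ContinuousMultilinearMap 𝕜 (fun _ : ι => E) F)
    (hz : ∀ i, ‖z i‖ = 1) (hpar : ∀ i, ‖⟪z j, z i⟫_𝕜‖ = 1) : ‖f z‖ = ‖f fun _ => z j‖ := by
  have hr (i : ι) : ∃ r : 𝕜, ‖r‖ = 1 ∧ z i = r • z j := by
    have hz0 (i : ι) : z i ≠ 0 := norm_ne_zero_iff.1 (by simp [hz i])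
    obtain ⟨r, -, hr⟩ := (norm_inner_eq_norm_iff (𝕜 := 𝕜) (hz0 j) (hz0 i)).1 (by simp [hpar, hz])
    refine ⟨r, ?_, hr⟩
    simpa [norm_smul, hz] using (congrArg norm hr).symm
  choose r hr_norm hr using hr
  conv_lhs => rw [show z = fun i => r i • z j from funext hr]
  simp [f.map_smul_univ, norm_smul, norm_prod, hr_norm]

theorem IsSymmetric.exists_norm_le_norm_apply_const [ProperSpace E] [Nontrivial E]
    (hf : f.IsSymmetric) :
    ∃ y : E, ‖y‖ = 1 ∧ ∀ v : ι → E, (∀ i, ‖v i‖ = 1) → ‖f v‖ ≤ ‖f fun _ => y‖ := by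
  set U := {v : ι → E | ∀ i, ‖v i‖ = 1}
  have hU : IsCompact U := by
    simpa [Set.pi] using isCompact_univ_pi fun _ : ι => isCompact_sphere (0 : E) 1
  obtain ⟨x, hx⟩ := exists_ne (0 : E)
  obtain ⟨e, he, -⟩ := exists_norm_eq_one_smul_eq (𝕜 := 𝕜) hx
  obtain ⟨x₀, hx₀, hmax₀⟩ :=
    hU.exists_isMaxOn ⟨fun _ => e, fun _ => he⟩ f.coe_continuous.norm.continuousOn
  have hK : IsCompact {v ∈ U | ‖f v‖ = ‖f x₀‖} :=
    hU.inter_right (isClosed_eq f.coe_continuous.norm continuous_const)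
  obtain ⟨z, ⟨hz, hzx₀⟩, hzmax⟩ :=
    hK.exists_isMaxOn ⟨x₀, hx₀, rfl⟩ (continuous_framePotential 𝕜).continuousOn
  have hmax : ∀ v : ι → E, (∀ i, ‖v i‖ = 1) → ‖f v‖ ≤ ‖f z‖ := fun v hv => hzx₀ ▸ hmax₀ hv
  have hpar := hf.norm_inner_eq_one_of_isMaxOn hz hmax
    fun v hv hfv => hzmax ⟨hv, hfv.trans hzx₀⟩
  rcases isEmpty_or_nonempty ι with hι | ⟨⟨j⟩⟩
  · exact ⟨e, he, fun v _ => by rw [Subsingleton.elim v fun _ => e]⟩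
  · exact ⟨z j, hz j, fun v hv =>
      (hmax v hv).trans_eq (f.norm_apply_eq_norm_apply_const hz (hpar j))⟩

end Banach

end ContinuousMultilinearMap

section Tensor

variable {𝕜 ι κ : Type*} [RCLike 𝕜] [Fintype ι] [DecidableEq ι] [Fintype κ]

theorem EuclideanSpace.norm_toLp_eq_one_iff (x : κ → 𝕜) :
    ‖(WithLp.toLp 2 x : EuclideanSpace 𝕜 κ)‖ = 1 ↔ ∑ l, ‖x l‖ ^ 2 = 1 := by
  rw [EuclideanSpace.norm_eq, Real.sqrt_eq_one]

noncomputable def tensorMultilinearForm (S : (ι → κ) → 𝕜) :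
    ContinuousMultilinearMap 𝕜 (fun _ : ι => EuclideanSpace 𝕜 κ) 𝕜 :=
  ∑ i, S i • (ContinuousMultilinearMap.mkPiAlgebra 𝕜 ι 𝕜).compContinuousLinearMap
    fun k => EuclideanSpace.proj (i k)

theorem tensorMultilinearForm_apply (S : (ι → κ) → 𝕜) (v : ι → EuclideanSpace 𝕜 κ) :
    tensorMultilinearForm S v = ∑ i, S i * ∏ k, v k (i k) := by
  simp [tensorMultilinearForm]

theorem isSymmetric_tensorMultilinearForm {S : (ι → κ) → 𝕜}
    (hS : ∀ (σ : Equiv.Perm ι) (i : ι → κ), S (i ∘ σ) = S i) :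
    (tensorMultilinearForm S).IsSymmetric := by
  intro σ v
  simp only [tensorMultilinearForm_apply]
  rw [← (Equiv.arrowCongr σ.symm (Equiv.refl κ)).sum_comp]
  refine sum_congr rfl fun i _ => ?_
  change S (i ∘ σ) * _ = _
  rw [hS]
  exact congrArg _ (Equiv.prod_comp σ fun k => v k (i k))

end Tensor

theorem stmt_8_general (n d : ℕ) (hn : 1 ≤ n)
    (S : (Fin d → Fin n) → ℂ)
    (hS : ∀ (σ : Equiv.Perm (Fin d)) (i : Fin d → Fin n), S (i ∘ σ) = S i) :
    sSup {r : ℝ | ∃ x : Fin d → Fin n → ℂ,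
        (∀ k, (∑ l, ‖x k l‖ ^ 2) = 1) ∧
        r = ‖∑ i : Fin d → Fin n, S i * ∏ k, x k (i k)‖} =
    sSup {r : ℝ | ∃ y : Fin n → ℂ, (∑ l, ‖y l‖ ^ 2) = 1 ∧
        r = ‖∑ i : Fin d → Fin n, S i * ∏ k, y (i k)‖} := by
  have : Nonempty (Fin n) := ⟨⟨0, hn⟩⟩
  obtain ⟨y, hy, hmax⟩ := (isSymmetric_tensorMultilinearForm hS).exists_norm_le_norm_apply_const
  have hy' : ∑ l, ‖y l‖ ^ 2 = 1 := (EuclideanSpace.norm_toLp_eq_one_iff _).1 hy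
  refine (IsGreatest.csSup_eq (a := ‖tensorMultilinearForm S fun _ => y‖) ⟨?_, ?_⟩).trans
    (IsGreatest.csSup_eq ⟨?_, ?_⟩).symm
  · exact ⟨fun _ => y, fun _ => hy', by simp [tensorMultilinearForm_apply]⟩
  · rintro r ⟨x, hx, rfl⟩
    simpa [tensorMultilinearForm_apply] using
      hmax (fun k => WithLp.toLp 2 (x k)) fun k => (EuclideanSpace.norm_toLp_eq_one_iff _).2 (hx k)
  · exact ⟨y, hy', by simp [tensorMultilinearForm_apply]⟩
  · rintro r ⟨x, hx, rfl⟩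
    simpa [tensorMultilinearForm_apply] using
      hmax (fun _ => WithLp.toLp 2 x) fun _ => (EuclideanSpace.norm_toLp_eq_one_iff _).2 hx

/-- Banach's theorem: the spectral norm of a symmetric tensor, a supremum
over d-tuples of unit vectors, equals the supremum over rank-one symmetric tensors. -/
theorem stmt_8 (n d : ℕ) (hn : 1 ≤ n) (hd : 1 ≤ d)
    (S : (Fin d → Fin n) → ℂ)
    (hS : ∀ (σ : Equiv.Perm (Fin d)) (i : Fin d → Fin n), S (i ∘ σ) = S i) :
    sSup {r : ℝ | ∃ x : Fin d → Fin n → ℂ,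
        (∀ k, (∑ l, ‖x k l‖ ^ 2) = 1) ∧
        r = ‖∑ i : Fin d → Fin n, S i * ∏ k, x k (i k)‖} =
    sSup {r : ℝ | ∃ y : Fin n → ℂ, (∑ l, ‖y l‖ ^ 2) = 1 ∧
        r = ‖∑ i : Fin d → Fin n, S i * ∏ k, y (i k)‖} :=
  stmt_8_general n d hn S hS
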